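/- arXiv:1207.3688 — 10 statements merged into one kernel-verified Lean document; each statement's English description precedes it below -/
import Mathlib

section
/- Let a = (x1,y1) and b = (x2,y2) be an increasing pair in ℝ² with x1 < x2 (so also y1 < y2), under the L1 metric. Then the line determined by a and b equals the set of points p = (x,y) satisfying: (x1 ≤ x ≤ x2 and y1 ≤ y ≤ y2) or (x ≤ x1 and y ≤ y1) or (x ≥ x2 and y ≥ y2). -/
/-- L1 (Manhattan) distance on the plane. -/
noncomputable def d1 (p q : ℝ × ℝ) : ℝ := |p.1 - q.1| + |p.2 - q.2|

/-- `btw1 a x b` : `x` is metrically between `a` and `b` in the L1 metric. -/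
def btw1 (a x b : ℝ × ℝ) : Prop := d1 a b = d1 a x + d1 x b

/-- The line determined by `a` and `b` in the L1 metric. -/
def line1 (a b : ℝ × ℝ) : Set (ℝ × ℝ) :=
  {x | btw1 x a b ∨ btw1 a x b ∨ btw1 a b x}

/-- The lines induced by a point set `X` in the L1 metric. -/
def lines1 (X : Set (ℝ × ℝ)) : Set (Set (ℝ × ℝ)) :=
  {L | ∃ a ∈ X, ∃ b ∈ X, a ≠ b ∧ L = line1 a b ∩ X}

/-- An increasing pair. -/
def IncrPair (p q : ℝ × ℝ) : Prop := (p.1 - q.1) * (p.2 - q.2) > 0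

/-- A decreasing pair. -/
def DecrPair (p q : ℝ × ℝ) : Prop := (p.1 - q.1) * (p.2 - q.2) < 0

lemma seg1 (a x b : ℝ) : |a - b| = |a - x| + |x - b| ↔ (a ≤ x ∧ x ≤ b) ∨ (b ≤ x ∧ x ≤ a) := by
  rcases abs_cases (a - b) with ⟨h1, h2⟩ | ⟨h1, h2⟩ <;>
  rcases abs_cases (a - x) with ⟨h3, h4⟩ | ⟨h3, h4⟩ <;>
  rcases abs_cases (x - b) with ⟨h5, h6⟩ | ⟨h5, h6⟩ <;>
  constructor <;> intro h <;>
  first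
    | (left; constructor <;> linarith)
    | (right; constructor <;> linarith)
    | (rcases h with ⟨ha, hb⟩ | ⟨ha, hb⟩ <;> linarith)
    | linarith

lemma btw1_iff (a x b : ℝ × ℝ) :
    btw1 a x b ↔ (|a.1 - b.1| = |a.1 - x.1| + |x.1 - b.1|) ∧
      (|a.2 - b.2| = |a.2 - x.2| + |x.2 - b.2|) := by
  have h1 := abs_sub_le a.1 x.1 b.1
  have h2 := abs_sub_le a.2 x.2 b.2
  unfold btw1 d1
  constructor
  · intro h
    constructor <;> linarith
  · intro ⟨ha, hb⟩; linarith

theorem increasing_line_description (x1 y1 x2 y2 : ℝ)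
    (hincr : IncrPair (x1, y1) (x2, y2)) (hx : x1 < x2) :
    line1 (x1, y1) (x2, y2) =
      {p : ℝ × ℝ |
        (x1 ≤ p.1 ∧ p.1 ≤ x2 ∧ y1 ≤ p.2 ∧ p.2 ≤ y2) ∨
        (p.1 ≤ x1 ∧ p.2 ≤ y1) ∨ (x2 ≤ p.1 ∧ y2 ≤ p.2)} := by
  have hy : y1 < y2 := by
    unfold IncrPair at hincr; simp at hincr; nlinarith
  ext ⟨x, y⟩
  simp only [line1, Set.mem_setOf_eq, btw1_iff, seg1]
  constructor
  · rintro (⟨h1, h2⟩ | ⟨h1, h2⟩ | ⟨h1, h2⟩) <;>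
      rcases h1 with ⟨ha, hb⟩ | ⟨ha, hb⟩ <;>
      rcases h2 with ⟨hc, hd⟩ | ⟨hc, hd⟩ <;> simp_all <;>
      first
        | (left; constructor <;> [linarith; constructor <;> [linarith; constructor <;> linarith]])
        | (right; left; constructor <;> linarith)
        | (right; right; constructor <;> linarith)
        | linarith
  · rintro (⟨h1, h2, h3, h4⟩ | ⟨h1, h2⟩ | ⟨h1, h2⟩)
    · right; left
      exact ⟨Or.inl ⟨h1, h2⟩, Or.inl ⟨h3, h4⟩⟩
    · left
      exact ⟨Or.inl ⟨h1, le_of_lt hx⟩, Or.inl ⟨h2, le_of_lt hy⟩⟩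
    · right; right
      exact ⟨Or.inl ⟨le_of_lt hx, h1⟩, Or.inl ⟨le_of_lt hy, h2⟩⟩
end

section
/- Let a = (x1,y) and b = (x2,y) with x1 < x2 be a horizontal pair in ℝ² with the L1 metric. Then the line ⟨a,b⟩ equals the set of points (x,y') such that (y' = y and x1 ≤ x ≤ x2) or x ≤ x1 or x ≥ x2. -/
theorem horizontal_line_description (x1 x2 y : ℝ) (hx : x1 < x2) :
    line1 (x1, y) (x2, y) =
      {p : ℝ × ℝ | (p.2 = y ∧ x1 ≤ p.1 ∧ p.1 ≤ x2) ∨ p.1 ≤ x1 ∨ x2 ≤ p.1} := by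
  ext ⟨px, py⟩
  simp only [line1, btw1, d1, Set.mem_setOf_eq, sub_self, abs_zero, add_zero, zero_add,
    abs_sub_comm x1 px, abs_sub_comm x2 px, abs_sub_comm y py]
  rcases abs_cases (px - x1) with ⟨h1, h1'⟩ | ⟨h1, h1'⟩ <;>
  rcases abs_cases (px - x2) with ⟨h2, h2'⟩ | ⟨h2, h2'⟩ <;>
  rcases abs_cases (x1 - x2) with ⟨h3, h3'⟩ | ⟨h3, h3'⟩ <;>
  rcases abs_cases (py - y) with ⟨h4, h4'⟩ | ⟨h4, h4'⟩ <;>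
  rw [h1, h2, h3, h4] <;>
  constructor <;> intro h
  all_goals first
    | (rcases h with h | h | h <;>
        first
        | (left; exact ⟨by linarith, by linarith, by linarith⟩)
        | (right; left; linarith)
        | (right; right; linarith))
    | (rcases h with ⟨hy, ha, hb⟩ | h | h <;>
        first
        | (left; linarith)
        | (right; left; linarith)
        | (right; right; linarith))
end

section
/- Let p1, p2 be an increasing pair of points in ℝ² with the L1 metric, and let p be a point not on the line ⟨p1,p2⟩. Then either (p, p1) or (p, p2) is a decreasing pair. -/
lemma seg_up (a x b : ℝ) (h1 : a ≤ x) (h2 : x ≤ b) : |a - b| = |a - x| + |x - b| := by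
  rw [abs_of_nonpos (by linarith), abs_of_nonpos (by linarith), abs_of_nonpos (by linarith)]
  ring

lemma seg_down (a x b : ℝ) (h1 : b ≤ x) (h2 : x ≤ a) : |a - b| = |a - x| + |x - b| := by
  rw [abs_of_nonneg (by linarith), abs_of_nonneg (by linarith), abs_of_nonneg (by linarith)]
  ring

lemma btw1_of (a x b : ℝ × ℝ) (h1 : |a.1 - b.1| = |a.1 - x.1| + |x.1 - b.1|)
    (h2 : |a.2 - b.2| = |a.2 - x.2| + |x.2 - b.2|) : btw1 a x b := by
  unfold btw1 d1; linarith

theorem decreasing_with_one_endpoint (p1 p2 p : ℝ × ℝ)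
    (hincr : IncrPair p1 p2) (hp : p ∉ line1 p1 p2) :
    DecrPair p p1 ∨ DecrPair p p2 := by
  by_contra h
  push_neg at h
  obtain ⟨h1, h2⟩ := h
  unfold DecrPair at h1 h2
  push_neg at h1 h2
  unfold IncrPair at hincr
  apply hp
  rcases mul_pos_iff.mp hincr with ⟨ha, hb⟩ | ⟨ha, hb⟩
  · -- p1.1 > p2.1, p1.2 > p2.2
    rcases mul_nonneg_iff.mp h1 with ⟨c1, c2⟩ | ⟨c1, c2⟩ <;>
      rcases mul_nonneg_iff.mp h2 with ⟨e1, e2⟩ | ⟨e1, e2⟩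
    · exact Or.inl (btw1_of _ _ _ (seg_down _ _ _ (by linarith) (by linarith))
        (seg_down _ _ _ (by linarith) (by linarith)))
    · exfalso; linarith
    · exact Or.inr (Or.inl (btw1_of _ _ _ (seg_down _ _ _ (by linarith) (by linarith))
        (seg_down _ _ _ (by linarith) (by linarith))))
    · exact Or.inr (Or.inr (btw1_of _ _ _ (seg_down _ _ _ (by linarith) (by linarith))
        (seg_down _ _ _ (by linarith) (by linarith))))
  · -- p1.1 < p2.1, p1.2 < p2.2
    rcases mul_nonneg_iff.mp h1 with ⟨c1, c2⟩ | ⟨c1, c2⟩ <;>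
      rcases mul_nonneg_iff.mp h2 with ⟨e1, e2⟩ | ⟨e1, e2⟩
    · exact Or.inr (Or.inr (btw1_of _ _ _ (seg_up _ _ _ (by linarith) (by linarith))
        (seg_up _ _ _ (by linarith) (by linarith))))
    · exact Or.inr (Or.inl (btw1_of _ _ _ (seg_up _ _ _ (by linarith) (by linarith))
        (seg_up _ _ _ (by linarith) (by linarith))))
    · exfalso; linarith
    · exact Or.inl (btw1_of _ _ _ (seg_up _ _ _ (by linarith) (by linarith))
        (seg_up _ _ _ (by linarith) (by linarith)))
end

section
/- Let p1, ..., pk be an increasing sequence of points in ℝ² (every pair among them is increasing), and let p be a point such that the pair (p, pj) is decreasing for some j. Then under the L1 metric, the line ⟨p, pj⟩ contains none of the points pi for i ≠ j. -/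
/-- one-dimensional betweenness from equality in the triangle inequality -/
lemma between_of_eq {u v w : ℝ} (h : |u - w| = |u - v| + |v - w|) :
    (u - v) * (w - v) ≤ 0 := by
  rcases abs_cases (u - v) with ⟨h1, _⟩ | ⟨h1, _⟩ <;>
  rcases abs_cases (v - w) with ⟨h2, _⟩ | ⟨h2, _⟩ <;>
  rcases abs_cases (u - w) with ⟨h3, _⟩ | ⟨h3, _⟩ <;>
  nlinarith

/-- split L1 betweenness coordinatewise -/
lemma btw1_coord {a x b : ℝ × ℝ} (h : btw1 a x b) :
    (a.1 - x.1) * (b.1 - x.1) ≤ 0 ∧ (a.2 - x.2) * (b.2 - x.2) ≤ 0 := by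
  unfold btw1 d1 at h
  have t1 : |a.1 - b.1| ≤ |a.1 - x.1| + |x.1 - b.1| := abs_sub_le _ _ _
  have t2 : |a.2 - b.2| ≤ |a.2 - x.2| + |x.2 - b.2| := abs_sub_le _ _ _
  have e1 : |a.1 - b.1| = |a.1 - x.1| + |x.1 - b.1| := by linarith
  have e2 : |a.2 - b.2| = |a.2 - x.2| + |x.2 - b.2| := by linarith
  exact ⟨between_of_eq e1, between_of_eq e2⟩

theorem decreasing_line_avoids_increasing_seq {k : ℕ} (p : Fin k → ℝ × ℝ)
    (hseq : ∀ i j : Fin k, i ≠ j → IncrPair (p i) (p j))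
    (q : ℝ × ℝ) (j : Fin k) (hdecr : DecrPair q (p j)) :
    ∀ i : Fin k, i ≠ j → p i ∉ line1 q (p j) := by
  intro i hij hmem
  have hincr : IncrPair (p i) (p j) := hseq i j hij
  unfold IncrPair at hincr
  unfold DecrPair at hdecr
  set a := q with ha
  set b := p j with hb
  set x := p i with hx
  rcases hmem with h | h | h <;> obtain ⟨c1, c2⟩ := btw1_coord h <;>
    rcases mul_pos_iff.mp hincr with ⟨h1, h2⟩ | ⟨h1, h2⟩ <;>
    rcases mul_neg_iff.mp hdecr with ⟨h3, h4⟩ | ⟨h3, h4⟩ <;>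
    nlinarith
end

section
/- Let p1, ..., pk be an increasing sequence of points in ℝ² under the L1 metric. Then for any indices i < j, the line ⟨pi, pj⟩ contains all points p1, ..., pk of the sequence. -/
lemma abs3 {a x b : ℝ} (h1 : a ≤ x) (h2 : x ≤ b) : |a - b| = |a - x| + |x - b| := by
  rw [abs_of_nonpos (by linarith), abs_of_nonpos (by linarith),
    abs_of_nonpos (by linarith)]; ring

lemma btw1_mono {a x b : ℝ × ℝ} (h1 : a.1 ≤ x.1) (h2 : x.1 ≤ b.1)
    (h3 : a.2 ≤ x.2) (h4 : x.2 ≤ b.2) : btw1 a x b := by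
  unfold btw1 d1; rw [abs3 h1 h2, abs3 h3 h4]; ring

lemma btw1_comm {a x b : ℝ × ℝ} (h : btw1 a x b) : btw1 b x a := by
  unfold btw1 d1 at h ⊢
  rw [abs_sub_comm b.1 a.1, abs_sub_comm b.1 x.1, abs_sub_comm x.1 a.1,
    abs_sub_comm b.2 a.2, abs_sub_comm b.2 x.2, abs_sub_comm x.2 a.2]
  linarith

theorem increasing_line_contains_seq {k : ℕ} (p : Fin k → ℝ × ℝ)
    (hseq : ∀ i j : Fin k, i ≠ j → IncrPair (p i) (p j))
    (i j : Fin k) (hij : i < j) :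
    ∀ l : Fin k, p l ∈ line1 (p i) (p j) := by
  intro l
  rcases eq_or_ne l i with rfl | hli
  · right; left; simp [btw1, d1]
  rcases eq_or_ne l j with rfl | hlj
  · right; left; simp [btw1, d1]
  have h1 := hseq l i hli
  have h2 := hseq l j hlj
  have h3 := hseq i j hij.ne
  unfold IncrPair at h1 h2 h3
  rcases lt_trichotomy (p l).1 (p i).1 with ha | ha | ha
  · have hya : (p l).2 < (p i).2 := by nlinarith
    rcases lt_trichotomy (p i).1 (p j).1 with hb | hb | hb
    · have hyb : (p i).2 < (p j).2 := by nlinarith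
      left; exact btw1_mono ha.le hb.le hya.le hyb.le
    · exfalso; rw [hb, sub_self, zero_mul] at h3; exact lt_irrefl 0 h3
    · have hyb : (p j).2 < (p i).2 := by nlinarith
      rcases lt_trichotomy (p l).1 (p j).1 with hc | hc | hc
      · have hyc : (p l).2 < (p j).2 := by nlinarith
        right; right; exact btw1_comm (btw1_mono hc.le hb.le hyc.le hyb.le)
      · exfalso; rw [hc, sub_self, zero_mul] at h2; exact lt_irrefl 0 h2
      · have hyc : (p j).2 < (p l).2 := by nlinarith
        right; left; exact btw1_comm (btw1_mono hc.le ha.le hyc.le hya.le)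
  · exfalso; rw [ha, sub_self, zero_mul] at h1; exact lt_irrefl 0 h1
  · have hya : (p i).2 < (p l).2 := by nlinarith
    rcases lt_trichotomy (p i).1 (p j).1 with hb | hb | hb
    · have hyb : (p i).2 < (p j).2 := by nlinarith
      rcases lt_trichotomy (p l).1 (p j).1 with hc | hc | hc
      · have hyc : (p l).2 < (p j).2 := by nlinarith
        right; left; exact btw1_mono ha.le hc.le hya.le hyc.le
      · exfalso; rw [hc, sub_self, zero_mul] at h2; exact lt_irrefl 0 h2
      · have hyc : (p j).2 < (p l).2 := by nlinarith
        right; right; exact btw1_mono hb.le hc.le hyb.le hyc.le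
    · exfalso; rw [hb, sub_self, zero_mul] at h3; exact lt_irrefl 0 h3
    · have hyb : (p j).2 < (p i).2 := by nlinarith
      left; exact btw1_comm (btw1_mono hb.le ha.le hyb.le hya.le)
end

section
/- Let X ⊆ ℝ² with the L1 metric, and let {(a,y1),(a,y2)} and {(b,y1'),(b,y2')} be two vertical pairs of points of X with y1 < y2 and y1' < y2'. Suppose a ≠ b and y1 < y2 ≤ y1' < y2'. Then the lines ⟨(a,y1),(a,y2)⟩ and ⟨(b,y1'),(b,y2')⟩ induced on X are distinct, provided some point of X lies outside ⟨(a,y1),(a,y2)⟩. -/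
theorem vertical_lines_distinct_disjoint_intervals (X : Set (ℝ × ℝ))
    (a b y1 y2 y1' y2' : ℝ)
    (h1 : (a, y1) ∈ X) (h2 : (a, y2) ∈ X) (h3 : (b, y1') ∈ X) (h4 : (b, y2') ∈ X)
    (hab : a ≠ b) (h12 : y1 < y2) (h21' : y2 ≤ y1') (h12' : y1' < y2')
    (hout : ∃ r ∈ X, r ∉ line1 (a, y1) (a, y2)) :
    line1 (a, y1) (a, y2) ∩ X ≠ line1 (b, y1') (b, y2') ∩ X := by
  obtain ⟨r, hrX, hrA⟩ := hout
  intro heq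
  have hv2 : r.2 < y2 := by
    by_contra h
    push_neg at h
    exact hrA (Or.inr (Or.inr (by
      unfold btw1 d1
      dsimp only
      rw [show |a - a| = 0 by simp,
          abs_of_nonpos (show y1 - y2 ≤ 0 by linarith),
          abs_of_nonpos (show y1 - r.2 ≤ 0 by linarith),
          abs_of_nonpos (show y2 - r.2 ≤ 0 by linarith)]
      ring)))
  have hrB : r ∈ line1 (b, y1') (b, y2') := by
    left
    unfold btw1 d1
    dsimp only
    rw [show |b - b| = 0 by simp,
        abs_of_nonpos (show r.2 - y2' ≤ 0 by linarith),
        abs_of_nonpos (show r.2 - y1' ≤ 0 by linarith),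
        abs_of_nonpos (show y1' - y2' ≤ 0 by linarith)]
    ring
  have hmem : r ∈ line1 (a, y1) (a, y2) ∩ X := heq ▸ ⟨hrB, hrX⟩
  exact hrA hmem.1
end

section
/- Let a = (x0,y1) and b = (x0,y2) be a vertical pair in ℝ² with y1 < y2, under the L1 metric. Then the line ⟨a,b⟩ equals the set of points (x,y) such that (x = x0 and y1 ≤ y ≤ y2) or y ≤ y1 or y ≥ y2. -/
theorem vertical_line_description (x0 y1 y2 : ℝ) (hy : y1 < y2) :
    line1 (x0, y1) (x0, y2) =
      {p : ℝ × ℝ | (p.1 = x0 ∧ y1 ≤ p.2 ∧ p.2 ≤ y2) ∨ p.2 ≤ y1 ∨ y2 ≤ p.2} := by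
  ext ⟨x, y⟩
  simp only [line1, btw1, d1, Set.mem_setOf_eq]
  constructor
  · intro h
    rcases le_or_gt y y1 with h1 | h1
    · exact Or.inr (Or.inl h1)
    rcases le_or_gt y2 y with h2 | h2
    · exact Or.inr (Or.inr h2)
    left
    refine ⟨?_, le_of_lt h1, le_of_lt h2⟩
    have e1 : |y - y1| = y - y1 := abs_of_nonneg (by linarith)
    have e2 : |y - y2| = y2 - y := by rw [abs_sub_comm]; exact abs_of_nonneg (by linarith)
    have e3 : |y1 - y2| = y2 - y1 := by rw [abs_sub_comm]; exact abs_of_nonneg (by linarith)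
    have e4 : |y1 - y| = y - y1 := by rw [abs_sub_comm]; exact e1
    have e5 : |y2 - y| = y2 - y := abs_of_nonneg (by linarith)
    have e6 : |x0 - x| = |x - x0| := abs_sub_comm _ _
    have hx : (0:ℝ) ≤ |x - x0| := abs_nonneg _
    rcases h with h | h | h <;>
      simp only [e1, e2, e3, e4, e5, e6, sub_self, abs_zero] at h
    · exfalso; linarith
    · have : |x - x0| = 0 := by linarith
      have := abs_eq_zero.mp this
      linarith
    · exfalso; linarith
  · rintro (⟨hx, h1, h2⟩ | h | h)
    · right; left
      subst hx
      rw [abs_of_nonpos (by linarith : y1 - y2 ≤ 0), abs_of_nonpos (by linarith : y1 - y ≤ 0),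
        abs_of_nonpos (by linarith : y - y2 ≤ 0)]
      simp only [sub_self, abs_zero]; ring
    · left
      rw [abs_of_nonpos (by linarith : y1 - y2 ≤ 0), abs_of_nonpos (by linarith : y - y2 ≤ 0),
        abs_of_nonpos (by linarith : y - y1 ≤ 0)]
      simp only [sub_self, abs_zero]; ring
    · right; right
      rw [abs_of_nonpos (by linarith : y1 - y2 ≤ 0), abs_of_nonpos (by linarith : y1 - y ≤ 0),
        abs_of_nonpos (by linarith : y2 - y ≤ 0)]
      simp only [sub_self, abs_zero]; ring
end

section
/- Let X ⊆ ℝ² with the L1 metric contain points p1, ..., pk all sharing the same x-coordinate a, with y-coordinates y1 < y2 < ... < yk, and suppose for each 1 ≤ i < k there exists a point pi' = (xi', yi') ∈ X with xi' ≠ a and yi < yi' < y(i+1). Then the lines ⟨pl, pm⟩ induced on X are pairwise distinct over all pairs l < m. -/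
lemma mem_line_iff_aux (a u v : ℝ) (p : ℝ × ℝ) (hx : p.1 ≠ a) (huv : u < v) :
    p ∈ line1 (a, u) (a, v) ↔ p.2 ≤ u ∨ v ≤ p.2 := by
  obtain ⟨x', t⟩ := p
  simp only at hx ⊢
  have hc : (0:ℝ) < |x' - a| := abs_pos.mpr (sub_ne_zero.mpr hx)
  have hc' : |a - x'| = |x' - a| := abs_sub_comm _ _
  simp only [line1, btw1, d1, Set.mem_setOf_eq, sub_self, abs_zero, zero_add]
  have e4 : |u - v| = v - u := by rw [abs_sub_comm]; exact abs_of_pos (by linarith)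
  simp only [hc', abs_sub_comm u t, abs_sub_comm v t, e4]
  constructor
  · intro h
    by_contra hcon
    push_neg at hcon
    obtain ⟨h1, h2⟩ := hcon
    have e1 : |t - u| = t - u := abs_of_pos (by linarith)
    have e2 : |t - v| = -(t - v) := abs_of_neg (by linarith)
    rcases h with h | h | h <;> simp only [e1, e2] at h <;> linarith
  · rintro (h | h)
    · left
      have e1 : |t - u| = -(t - u) := abs_of_nonpos (by linarith)
      have e2 : |t - v| = -(t - v) := abs_of_neg (by linarith)
      simp only [e1, e2]; ring
    · right; right
      have e1 : |t - u| = t - u := abs_of_nonneg (by linarith)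
      have e2 : |t - v| = t - v := abs_of_nonneg (by linarith)
      simp only [e1, e2]; ring

theorem collinear_points_distinct_lines (X : Set (ℝ × ℝ)) {k : ℕ}
    (a : ℝ) (y : Fin k → ℝ) (hy : StrictMono y)
    (hmem : ∀ i : Fin k, (a, y i) ∈ X)
    (hsep : ∀ i j : Fin k, (i : ℕ) + 1 = j →
      ∃ p' ∈ X, p'.1 ≠ a ∧ y i < p'.2 ∧ p'.2 < y j) :
    ∀ l m l' m' : Fin k, l < m → l' < m' → (l, m) ≠ (l', m') →
      line1 (a, y l) (a, y m) ∩ X ≠ line1 (a, y l') (a, y m') ∩ X := by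
  have key : ∀ l m l' m' : Fin k, l < m → l' < m' → (l < l' ∨ (l = l' ∧ m < m')) →
      line1 (a, y l) (a, y m) ∩ X ≠ line1 (a, y l') (a, y m') ∩ X := by
    rintro l m l' m' hlm hlm' (hll' | ⟨rfl, hmm'⟩)
    · -- separator between y l and y (l+1)
      have hl1 : (l : ℕ) + 1 < k := lt_of_le_of_lt (Nat.succ_le_of_lt hll') l'.2
      obtain ⟨p', hpX, hpx, hpt1, hpt2⟩ := hsep l ⟨(l : ℕ) + 1, hl1⟩ rfl
      have hsucc_le : y ⟨(l : ℕ) + 1, hl1⟩ ≤ y l' := hy.monotone (Nat.succ_le_of_lt hll')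
      have hsucc_le_m : y ⟨(l : ℕ) + 1, hl1⟩ ≤ y m := hy.monotone (Nat.succ_le_of_lt hlm)
      intro heq
      have h2 : p' ∈ line1 (a, y l') (a, y m') ∩ X :=
        ⟨(mem_line_iff_aux a (y l') (y m') p' hpx (hy hlm')).mpr (Or.inl (by linarith)), hpX⟩
      rw [← heq] at h2
      exact ((mem_line_iff_aux a (y l) (y m) p' hpx (hy hlm)).mp h2.1).elim
        (by intro h; linarith) (by intro h; linarith)
    · -- l = l', m < m'; separator between y m and y (m+1)
      have hm1 : (m : ℕ) + 1 < k := lt_of_le_of_lt (Nat.succ_le_of_lt hmm') m'.2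
      obtain ⟨p', hpX, hpx, hpt1, hpt2⟩ := hsep m ⟨(m : ℕ) + 1, hm1⟩ rfl
      have hsucc_le : y ⟨(m : ℕ) + 1, hm1⟩ ≤ y m' := hy.monotone (Nat.succ_le_of_lt hmm')
      have hl_lt : y l < y m := hy hlm
      intro heq
      have h1 : p' ∈ line1 (a, y l) (a, y m) ∩ X :=
        ⟨(mem_line_iff_aux a (y l) (y m) p' hpx (hy hlm)).mpr (Or.inr (by linarith)), hpX⟩
      rw [heq] at h1
      exact ((mem_line_iff_aux a (y l) (y m') p' hpx (hy hlm')).mp h1.1).elim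
        (by intro h; linarith) (by intro h; linarith)
  intro l m l' m' hlm hlm' hne
  rcases lt_trichotomy l l' with h | rfl | h
  · exact key l m l' m' hlm hlm' (Or.inl h)
  · rcases lt_trichotomy m m' with h | rfl | h
    · exact key l m l m' hlm hlm' (Or.inr ⟨rfl, h⟩)
    · exact absurd rfl hne
    · exact (key l m' l m hlm' hlm (Or.inr ⟨rfl, h⟩)).symm
  · exact (key l' m' l m hlm' hlm (Or.inl h)).symm
end

section
/- Let φ: ℝ² → ℝ² be the rotation by 45 degrees about the origin. For any two distinct points v1, v2 ∈ ℝ², the line determined by φ(v1) and φ(v2) in the L∞ metric equals the image under φ of the line determined by v1 and v2 in the L1 metric: ⟨φ(v1), φ(v2)⟩_∞ = {φ(u) : u ∈ ⟨v1, v2⟩_1}. -/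
/-- L∞ distance on the plane. -/
noncomputable def dInf (p q : ℝ × ℝ) : ℝ := max |p.1 - q.1| |p.2 - q.2|

def btwInf (a x b : ℝ × ℝ) : Prop := dInf a b = dInf a x + dInf x b

def lineInf (a b : ℝ × ℝ) : Set (ℝ × ℝ) :=
  {x | btwInf x a b ∨ btwInf a x b ∨ btwInf a b x}

/-- Rotation by 45 degrees about the origin. -/
noncomputable def rot45 (p : ℝ × ℝ) : ℝ × ℝ :=
  ((p.1 - p.2) / Real.sqrt 2, (p.1 + p.2) / Real.sqrt 2)

lemma max_abs_sub_abs_add {α : Type*} [AddCommGroup α] [LinearOrder α] [IsOrderedAddMonoid α]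
    (a b : α) : max |a - b| |a + b| = |a| + |b| := by
  refine le_antisymm (max_le (abs_sub _ _) (abs_add_le _ _)) ?_
  rcases le_total 0 a with ha | ha <;> rcases le_total 0 b with hb | hb <;>
    simp only [abs_of_nonneg, abs_of_nonpos, ha, hb, le_max_iff, le_abs] <;> grind

lemma dInf_rot45 (p q : ℝ × ℝ) : dInf (rot45 p) (rot45 q) = d1 p q / √2 := by
  have hsub : (p.1 - p.2) / √2 - (q.1 - q.2) / √2 = ((p.1 - q.1) - (p.2 - q.2)) / √2 := by ring
  have hadd : (p.1 + p.2) / √2 - (q.1 + q.2) / √2 = ((p.1 - q.1) + (p.2 - q.2)) / √2 := by ring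
  rw [dInf, d1, rot45, rot45, hsub, hadd, abs_div, abs_div, abs_of_pos (Real.sqrt_pos.2 two_pos),
    max_div_div_right (Real.sqrt_nonneg 2), max_abs_sub_abs_add]

lemma btwInf_rot45_iff (a x b : ℝ × ℝ) :
    btwInf (rot45 a) (rot45 x) (rot45 b) ↔ btw1 a x b := by
  rw [btwInf, btw1, dInf_rot45, dInf_rot45, dInf_rot45, ← add_div,
    div_left_inj' (Real.sqrt_ne_zero'.2 two_pos)]

lemma preimage_rot45_lineInf (a b : ℝ × ℝ) :
    rot45 ⁻¹' lineInf (rot45 a) (rot45 b) = line1 a b := by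
  ext x
  simp only [Set.mem_preimage, lineInf, line1, Set.mem_ofPred_eq, btwInf_rot45_iff]

lemma rot45_surjective : Function.Surjective rot45 := by
  intro q
  refine ⟨((q.1 + q.2) / √2, (q.2 - q.1) / √2), ?_⟩
  have h2 : √2 ≠ 0 := Real.sqrt_ne_zero'.2 two_pos
  ext <;> simp only [rot45] <;> field_simp <;> rw [Real.sq_sqrt zero_le_two] <;> ring

theorem linf_line_eq_rotated_l1_line_general (v1 v2 : ℝ × ℝ) :
    lineInf (rot45 v1) (rot45 v2) = rot45 '' (line1 v1 v2) := by
  rw [← preimage_rot45_lineInf, Set.image_preimage_eq _ rot45_surjective]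

theorem linf_line_eq_rotated_l1_line (v1 v2 : ℝ × ℝ) (h : v1 ≠ v2) :
    lineInf (rot45 v1) (rot45 v2) = rot45 '' (line1 v1 v2) :=
  linf_line_eq_rotated_l1_line_general v1 v2
end

section
/- Let X be a finite set of points in ℝ² with the L1 metric such that no two points share x- or y-coordinates, and suppose there exist p1, p2 ∈ X such that p1 ⪯ q for all q ∈ X and q ⪯ p2 for all q ∈ X, where p ⪯ q means p = q or (p,q) is an increasing pair with p having smaller x-coordinate. Then the line ⟨p1, p2⟩ contains all points of X. -/
/-- The partial order: `p ⪯ q` iff `p = q` or `p,q` is an increasing pair with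
`p` having the smaller `x`-coordinate. -/
def Preceq (p q : ℝ × ℝ) : Prop := p = q ∨ (IncrPair p q ∧ p.1 < q.1)

theorem min_max_line_contains_all (X : Finset (ℝ × ℝ))
    (hcoord : ∀ p ∈ X, ∀ q ∈ X, p ≠ q → p.1 ≠ q.1 ∧ p.2 ≠ q.2)
    (p1 p2 : ℝ × ℝ) (hp1 : p1 ∈ X) (hp2 : p2 ∈ X)
    (h1 : ∀ q ∈ X, Preceq p1 q) (h2 : ∀ q ∈ X, Preceq q p2) :
    ↑X ⊆ line1 p1 p2 := by
  intro q hq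
  simp only [Finset.coe_sort_coe, Finset.mem_coe] at hq
  have hA := h1 q hq
  have hB := h2 q hq
  right; left
  rcases hA with rfl | ⟨hi1, hx1⟩
  · show btw1 p1 p1 p2
    simp [btw1, d1]
  rcases hB with rfl | ⟨hi2, hx2⟩
  · show btw1 p1 q q
    simp [btw1, d1]
  -- p1.1 < q.1 < p2.1, and increasing pairs give p1.2 < q.2 < p2.2
  have hy1 : p1.2 < q.2 := by
    rcases (mul_pos_iff.mp hi1) with ⟨h, h'⟩ | ⟨h, h'⟩ <;> nlinarith
  have hy2 : q.2 < p2.2 := by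
    rcases (mul_pos_iff.mp hi2) with ⟨h, h'⟩ | ⟨h, h'⟩ <;> nlinarith
  show d1 p1 p2 = d1 p1 q + d1 q p2
  simp only [d1]
  rw [abs_of_neg (by linarith : p1.1 - p2.1 < 0), abs_of_neg (by linarith : p1.2 - p2.2 < 0),
    abs_of_neg (by linarith : p1.1 - q.1 < 0), abs_of_neg (by linarith : p1.2 - q.2 < 0),
    abs_of_neg (by linarith : q.1 - p2.1 < 0), abs_of_neg (by linarith : q.2 - p2.2 < 0)]
  ring
end
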